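/- arXiv:2106.11795 — 2 statements merged into one kernel-verified Lean document; each statement's English description precedes it below -/
import Mathlib

section
/- Let M : ℝ^m × ℝ³ → ℝ be continuously differentiable, let c₀ ∈ ℝ^m and p₀ ∈ ℝ³ satisfy M(c₀, p₀) = 0 with n := ∇_p M(c₀, p₀) ≠ 0, and let u, v ∈ ℝ³ be unit vectors with u·v = n·u = n·v = 0. If p* and q are two maps defined on a neighborhood of c₀, both continuous at c₀ with p*(c₀) = q(c₀) = p₀, and both satisfying, for all c in their common domain, M(c, ·(c)) = 0, (·(c) − p₀)·u = 0 and (·(c) − p₀)·v = 0, then p* and q agree on some neighborhood of c₀. -/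
/-- Local uniqueness: two maps `p*` and `q`, defined on a
common neighborhood `U` of `c₀`, continuous at `c₀`, sending `c₀` to `p₀` and
both satisfying `M (c, ·(c)) = 0`, `(·(c) - p₀)·u = 0` and `(·(c) - p₀)·v = 0`
on `U`, agree on some neighborhood of `c₀`. -/
theorem deepmesh_implicit_uniqueness {m : ℕ}
    (M : (EuclideanSpace ℝ (Fin m)) × (EuclideanSpace ℝ (Fin 3)) → ℝ)
    (hM : ContDiff ℝ 1 M)
    (c₀ : EuclideanSpace ℝ (Fin m)) (p₀ : EuclideanSpace ℝ (Fin 3))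
    (h₀ : M (c₀, p₀) = 0)
    (n : EuclideanSpace ℝ (Fin 3))
    (hn : n = gradient (fun p => M (c₀, p)) p₀)
    (hn0 : n ≠ 0)
    (u v : EuclideanSpace ℝ (Fin 3))
    (hu : ‖u‖ = 1) (hv : ‖v‖ = 1)
    (huv : (inner ℝ u v : ℝ) = 0)
    (hnu : (inner ℝ n u : ℝ) = 0)
    (hnv : (inner ℝ n v : ℝ) = 0)
    (U : Set (EuclideanSpace ℝ (Fin m))) (hU : U ∈ nhds c₀)
    (p q : EuclideanSpace ℝ (Fin m) → EuclideanSpace ℝ (Fin 3))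
    (hpc : ContinuousAt p c₀) (hqc : ContinuousAt q c₀)
    (hp₀ : p c₀ = p₀) (hq₀ : q c₀ = p₀)
    (hp : ∀ c ∈ U,
      M (c, p c) = 0 ∧ (inner ℝ (p c - p₀) u : ℝ) = 0 ∧
        (inner ℝ (p c - p₀) v : ℝ) = 0)
    (hq : ∀ c ∈ U,
      M (c, q c) = 0 ∧ (inner ℝ (q c - p₀) u : ℝ) = 0 ∧
        (inner ℝ (q c - p₀) v : ℝ) = 0) :
    ∃ V ∈ nhds c₀, ∀ c ∈ V, p c = q c := by
  classical
  set G : (EuclideanSpace ℝ (Fin m)) × (EuclideanSpace ℝ (Fin 3)) → (EuclideanSpace ℝ (Fin m)) × (ℝ × ℝ × ℝ) :=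
    fun x => (x.1, (M x, (inner ℝ (x.2 - p₀) u : ℝ), (inner ℝ (x.2 - p₀) v : ℝ))) with hGdef
  set D : (EuclideanSpace ℝ (Fin m)) × (EuclideanSpace ℝ (Fin 3)) →L[ℝ] ℝ := fderiv ℝ M (c₀, p₀) with hD
  set A : (EuclideanSpace ℝ (Fin m)) × (EuclideanSpace ℝ (Fin 3)) →L[ℝ] (EuclideanSpace ℝ (Fin m)) × (ℝ × ℝ × ℝ) :=
    (ContinuousLinearMap.fst ℝ _ _).prod
      (D.prod (((innerSL ℝ u).comp (ContinuousLinearMap.snd ℝ _ _)).prod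
        ((innerSL ℝ v).comp (ContinuousLinearMap.snd ℝ _ _)))) with hA
  have hMd : HasStrictFDerivAt M D (c₀, p₀) := by
    rw [hD]; exact (hM.contDiffAt).hasStrictFDerivAt one_ne_zero
  have hinner : ∀ w : EuclideanSpace ℝ (Fin 3),
      HasStrictFDerivAt (fun x : (EuclideanSpace ℝ (Fin m)) × (EuclideanSpace ℝ (Fin 3)) =>
        (inner ℝ (x.2 - p₀) w : ℝ))
      ((innerSL ℝ w).comp (ContinuousLinearMap.snd ℝ _ _)) (c₀, p₀) := by
    intro w
    have base := ((((innerSL ℝ w).comp (ContinuousLinearMap.snd ℝ (EuclideanSpace ℝ (Fin m))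
        (EuclideanSpace ℝ (Fin 3)))).hasStrictFDerivAt
        (x := ((c₀, p₀) : (EuclideanSpace ℝ (Fin m)) × (EuclideanSpace ℝ (Fin 3))))).sub_const
        ((inner ℝ w p₀ : ℝ)))
    have h1 : (fun x : (EuclideanSpace ℝ (Fin m)) × (EuclideanSpace ℝ (Fin 3)) =>
        (inner ℝ (x.2 - p₀) w : ℝ))
        = fun x => ((innerSL ℝ w).comp (ContinuousLinearMap.snd ℝ (EuclideanSpace ℝ (Fin m))
            (EuclideanSpace ℝ (Fin 3)))) x - (inner ℝ w p₀ : ℝ) := by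
      funext x
      show (inner ℝ (x.2 - p₀) w : ℝ) = (inner ℝ w x.2 : ℝ) - (inner ℝ w p₀ : ℝ)
      rw [inner_sub_left, real_inner_comm x.2 w, real_inner_comm p₀ w]
    rw [h1]
    exact base
  have hG : HasStrictFDerivAt G A (c₀, p₀) :=
    HasStrictFDerivAt.prodMk ((ContinuousLinearMap.fst ℝ (EuclideanSpace ℝ (Fin m)) (EuclideanSpace ℝ (Fin 3))).hasStrictFDerivAt)
      (hMd.prodMk ((hinner u).prodMk (hinner v)))
  -- key fact: ⟪n, dp⟫ = D (0, dp)
  have hgrad : ∀ dp : EuclideanSpace ℝ (Fin 3), (inner ℝ n dp : ℝ) = D (0, dp) := by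
    intro dp
    have h2 : HasFDerivAt (fun pp : EuclideanSpace ℝ (Fin 3) => ((c₀, pp) :
        (EuclideanSpace ℝ (Fin m)) × (EuclideanSpace ℝ (Fin 3))))
        ((0 : _ →L[ℝ] _).prod (ContinuousLinearMap.id ℝ _)) p₀ :=
      (hasFDerivAt_const c₀ p₀).prodMk (hasFDerivAt_id p₀)
    have hcomp : HasFDerivAt (fun pp : EuclideanSpace ℝ (Fin 3) => M (c₀, pp))
        (D.comp ((0 : _ →L[ℝ] _).prod (ContinuousLinearMap.id ℝ _))) p₀ :=
      (hMd.hasFDerivAt).comp p₀ h2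
    have hfd : fderiv ℝ (fun pp : EuclideanSpace ℝ (Fin 3) => M (c₀, pp)) p₀
        = D.comp ((0 : _ →L[ℝ] _).prod (ContinuousLinearMap.id ℝ _)) := hcomp.fderiv
    have h3 : (inner ℝ n dp : ℝ) = fderiv ℝ (fun pp : EuclideanSpace ℝ (Fin 3) => M (c₀, pp)) p₀ dp := by
      rw [hn, gradient]
      exact InnerProductSpace.toDual_symm_apply
    rw [h3, hfd]
    simp
  -- injectivity of A
  have hinj : Function.Injective A := by
    rw [injective_iff_map_eq_zero]
    rintro ⟨dc, dp⟩ hz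
    have h1 : dc = 0 := congrArg Prod.fst hz
    have h2 : D (dc, dp) = 0 := congrArg (fun y => y.2.1) hz
    have h3 : (inner ℝ u dp : ℝ) = 0 := congrArg (fun y => y.2.2.1) hz
    have h4 : (inner ℝ v dp : ℝ) = 0 := congrArg (fun y => y.2.2.2) hz
    subst h1
    have h5 : (inner ℝ n dp : ℝ) = 0 := by rw [hgrad dp]; exact h2
    set w : Fin 3 → EuclideanSpace ℝ (Fin 3) := ![(‖n‖⁻¹ : ℝ) • n, u, v] with hw
    have hnn : ‖n‖ ≠ 0 := norm_ne_zero_iff.mpr hn0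
    have hortho : Orthonormal ℝ w := by
      constructor
      · intro i
        fin_cases i
        · show ‖(‖n‖⁻¹ : ℝ) • n‖ = 1
          rw [norm_smul, Real.norm_eq_abs, abs_inv, abs_norm]
          field_simp
        · exact hu
        · exact hv
      · intro i j hij
        fin_cases i <;> fin_cases j
        · exact absurd rfl hij
        · show (inner ℝ ((‖n‖⁻¹ : ℝ) • n) u : ℝ) = 0
          rw [real_inner_smul_left, hnu, mul_zero]
        · show (inner ℝ ((‖n‖⁻¹ : ℝ) • n) v : ℝ) = 0
          rw [real_inner_smul_left, hnv, mul_zero]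
        · show (inner ℝ u ((‖n‖⁻¹ : ℝ) • n) : ℝ) = 0
          rw [real_inner_smul_right, real_inner_comm, hnu, mul_zero]
        · exact absurd rfl hij
        · exact huv
        · show (inner ℝ v ((‖n‖⁻¹ : ℝ) • n) : ℝ) = 0
          rw [real_inner_smul_right, real_inner_comm, hnv, mul_zero]
        · show (inner ℝ v u : ℝ) = 0
          rw [real_inner_comm]; exact huv
        · exact absurd rfl hij
    have hspan : Submodule.span ℝ (Set.range w) = ⊤ := by
      refine hortho.linearIndependent.span_eq_top_of_card_eq_finrank ?_
      simp [finrank_euclideanSpace_fin]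
    have hdp : dp ∈ (Submodule.span ℝ (Set.range w))ᗮ := by
      rw [Submodule.mem_orthogonal]
      intro y hy
      induction hy using Submodule.span_induction with
      | mem y hy =>
        obtain ⟨i, rfl⟩ := hy
        fin_cases i
        · show (inner ℝ ((‖n‖⁻¹ : ℝ) • n) dp : ℝ) = 0
          rw [real_inner_smul_left, h5]; ring
        · exact h3
        · exact h4
      | zero => simp
      | add a b _ _ ha hb => rw [inner_add_left, ha, hb]; ring
      | smul r a _ ha => rw [real_inner_smul_left, ha]; ring
    rw [hspan, Submodule.top_orthogonal_eq_bot, Submodule.mem_bot] at hdp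
    simp [hdp]
  have hrank : Module.finrank ℝ ((EuclideanSpace ℝ (Fin m)) × (EuclideanSpace ℝ (Fin 3)))
      = Module.finrank ℝ ((EuclideanSpace ℝ (Fin m)) × (ℝ × ℝ × ℝ)) := by
    simp [Module.finrank_prod, finrank_euclideanSpace_fin]
  set A' := (A.toLinearMap.linearEquivOfInjective hinj hrank).toContinuousLinearEquiv with hA'
  have hAA' : (A' : _ →L[ℝ] _) = A := by
    exact ContinuousLinearMap.ext fun x => rfl
  have hG' : HasStrictFDerivAt G (A' : _ →L[ℝ] _) (c₀, p₀) := by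
    rw [hAA']; exact hG
  set Φ := hG'.toOpenPartialHomeomorph G with hΦ
  have hsrc : ((c₀, p₀) : (EuclideanSpace ℝ (Fin m)) × (EuclideanSpace ℝ (Fin 3))) ∈ Φ.source :=
    hG'.mem_toOpenPartialHomeomorph_source
  have hΦG : ∀ x, Φ x = G x := fun x => rfl
  have hps : ContinuousAt (fun c => ((c, p c) :
      (EuclideanSpace ℝ (Fin m)) × (EuclideanSpace ℝ (Fin 3)))) c₀ := continuousAt_id.prodMk hpc
  have hqs : ContinuousAt (fun c => ((c, q c) :
      (EuclideanSpace ℝ (Fin m)) × (EuclideanSpace ℝ (Fin 3)))) c₀ := continuousAt_id.prodMk hqc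
  have hVp : (fun c => ((c, p c) : _ × _)) ⁻¹' Φ.source ∈ nhds c₀ := by
    apply hps.preimage_mem_nhds
    apply Φ.open_source.mem_nhds
    rwa [hp₀]
  have hVq : (fun c => ((c, q c) : _ × _)) ⁻¹' Φ.source ∈ nhds c₀ := by
    apply hqs.preimage_mem_nhds
    apply Φ.open_source.mem_nhds
    rwa [hq₀]
  refine ⟨U ∩ ((fun c => ((c, p c) : _ × _)) ⁻¹' Φ.source
      ∩ (fun c => ((c, q c) : _ × _)) ⁻¹' Φ.source),
    Filter.inter_mem hU (Filter.inter_mem hVp hVq), ?_⟩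
  rintro c ⟨hcU, hcp, hcq⟩
  obtain ⟨hp1, hp2, hp3⟩ := hp c hcU
  obtain ⟨hq1, hq2, hq3⟩ := hq c hcU
  have hGeq : G (c, p c) = G (c, q c) := by
    simp only [hGdef, hp1, hp2, hp3, hq1, hq2, hq3]
  have heq := Φ.injOn hcp hcq (by rw [hΦG, hΦG]; exact hGeq)
  exact congrArg Prod.snd heq
end

section
/- Let S ⊆ ℝ^n be a nonempty closed set and let d : ℝ^n → ℝ be the Euclidean distance function d(x) = dist(x, S). If x ∉ S and d is differentiable at x, then the gradient of d at x has norm exactly 1: ‖∇d(x)‖ = 1. -/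
/-- The Euclidean distance function to a nonempty closed set
`S ⊆ ℝⁿ` has gradient of norm exactly `1` at every point `x ∉ S` where it is
differentiable. -/
theorem norm_gradient_distance_function {n : ℕ}
    (S : Set (EuclideanSpace ℝ (Fin n)))
    (hS : S.Nonempty) (hSc : IsClosed S)
    (d : EuclideanSpace ℝ (Fin n) → ℝ)
    (hd : d = fun x => Metric.infDist x S)
    (x : EuclideanSpace ℝ (Fin n))
    (hx : x ∉ S)
    (hdiff : DifferentiableAt ℝ d x) :
    ‖gradient d x‖ = 1 := by
  have hnorm : ‖gradient d x‖ = ‖fderiv ℝ d x‖ := by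
    rw [gradient, LinearIsometryEquiv.norm_map]
  set L := fderiv ℝ d x with hL
  -- upper bound: d is 1-Lipschitz
  have hlip : LipschitzWith 1 d := by
    rw [hd]; exact Metric.lipschitz_infDist_pt S
  have hub : ‖L‖ ≤ 1 := by
    simpa using norm_fderiv_le_of_lipschitz ℝ hlip
  -- nearest point
  obtain ⟨y, hyS, hxy⟩ := hSc.exists_infDist_eq_dist hS x
  set r := Metric.infDist x S with hr
  have hr_pos : 0 < r := (hSc.notMem_iff_infDist_pos hS).mp hx
  set v : EuclideanSpace ℝ (Fin n) := y - x with hv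
  have hvnorm : ‖v‖ = r := by
    rw [hv, hxy, dist_eq_norm, norm_sub_rev]
  -- value of d along the segment
  have hseg : ∀ t ∈ Set.Icc (0:ℝ) 1, d (x + t • v) = (1 - t) * r := by
    intro t ht
    have hle : d (x + t • v) ≤ (1 - t) * r := by
      rw [hd]
      calc Metric.infDist (x + t • v) S ≤ dist (x + t • v) y :=
            Metric.infDist_le_dist_of_mem hyS
        _ = ‖(1 - t) • v‖ := by
            rw [dist_eq_norm, show x + t • v - y = -((1 - t) • v) by rw [hv]; module,
              norm_neg]
        _ = (1 - t) * r := by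
            rw [norm_smul, Real.norm_eq_abs, abs_of_nonneg (by linarith [ht.2]), hvnorm]
    have hge : (1 - t) * r ≤ d (x + t • v) := by
      have h1 : r ≤ Metric.infDist (x + t • v) S + dist x (x + t • v) :=
        Metric.infDist_le_infDist_add_dist
      have h2 : dist x (x + t • v) = t * r := by
        rw [dist_eq_norm]
        have : x - (x + t • v) = (-t) • v := by module
        rw [this, norm_smul, Real.norm_eq_abs, abs_neg, abs_of_nonneg ht.1, hvnorm]
      rw [hd]
      linarith
    linarith
  -- derivative of d along the segment at 0
  have hcurve : HasDerivAt (fun t : ℝ => x + t • v) v 0 := by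
    simpa using ((hasDerivAt_id (0:ℝ)).smul_const v).const_add x
  have hf : HasDerivAt (fun t : ℝ => d (x + t • v)) (L v) 0 := by
    have h0 : HasFDerivAt d L (x + (0:ℝ) • v) := by simpa using hdiff.hasFDerivAt
    exact h0.comp_hasDerivAt 0 hcurve
  have hfW : HasDerivWithinAt (fun t : ℝ => d (x + t • v)) (L v) (Set.Icc 0 1) 0 :=
    hf.hasDerivWithinAt
  have hg : HasDerivWithinAt (fun t : ℝ => (1 - t) * r) (-r) (Set.Icc 0 1) 0 := by
    have : HasDerivAt (fun t : ℝ => (1 - t) * r) (-r) 0 := by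
      simpa using (((hasDerivAt_id (0:ℝ)).const_sub 1).mul_const r)
    exact this.hasDerivWithinAt
  have hfW' : HasDerivWithinAt (fun t : ℝ => d (x + t • v)) (-r) (Set.Icc 0 1) 0 := by
    refine hg.congr (fun t ht => (hseg t ht)) ?_
    simpa using (hseg 0 ⟨le_refl 0, zero_le_one⟩)
  have hud : UniqueDiffWithinAt ℝ (Set.Icc (0:ℝ) 1) 0 :=
    (uniqueDiffOn_Icc one_pos) 0 ⟨le_refl 0, zero_le_one⟩
  have hLv : L v = -r := hud.eq_deriv _ hfW hfW'
  -- lower bound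
  have hlb : 1 ≤ ‖L‖ := by
    have h1 : ‖L v‖ ≤ ‖L‖ * ‖v‖ := L.le_opNorm v
    rw [hLv, hvnorm] at h1
    have : r ≤ ‖L‖ * r := by
      simpa [abs_of_pos hr_pos] using h1
    have := le_of_mul_le_mul_right (by linarith : 1 * r ≤ ‖L‖ * r) hr_pos
    linarith
  rw [hnorm]
  linarith
end
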